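/- Let X be a strictly convex smooth 2-dimensional Banach space that is not absolutely smooth, with natural parameterization r and phase shift φ. Then the set C of points s ∈ ℝ at which φ is not Lipschitz is uncountable, and consequently there exist a, b ∈ C such that the vectors r(a) and r(b) are linearly independent. -/

import Mathlib

/-!
Let `μ` be the Stieltjes measure of the continuous monotone function `φ`. If `φ` were Lipschitz
at all points outside a countable set, a Vitali covering argument would bound `μ` by a multiple
of Lebesgue measure on each set where `φ` is uniformly Lipschitz, so `μ ≪ volume`. Then `φ`, and
with it `r' = r ∘ φ` (as `r` is 1-Lipschitz), would be absolutely continuous on every interval.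
Hence the set `C` of non-Lipschitz points of `φ` is uncountable. Since `r'` never vanishes, the
level sets of `r` are discrete, hence countable; so for `a ∈ C` some `b ∈ C` has `r b ≠ ±r a`,
and two such unit vectors are linearly independent.
-/

open Metric Set Function Module

/-- `f` is Lipschitz at the point `s`: there is a constant `C` with
`|f(s+ε)-f(s)| ≤ C|ε| + o(ε)` for small `ε`. -/
def LipschitzPtAt (f : ℝ → ℝ) (s : ℝ) : Prop :=
  ∃ C : ℝ, ∀ η : ℝ, 0 < η → ∃ δ : ℝ, 0 < δ ∧ ∀ ε : ℝ, |ε| < δ →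
    |f (s + ε) - f s| ≤ C * |ε| + η * |ε|

/-- `f` is absolutely continuous on the interval `[a, b]`. -/
def AbsContOn {X : Type*} [NormedAddCommGroup X] (f : ℝ → X) (a b : ℝ) : Prop :=
  ∀ η : ℝ, 0 < η → ∃ δ : ℝ, 0 < δ ∧ ∀ n : ℕ, ∀ x y : Fin n → ℝ,
    (∀ i, a ≤ x i ∧ x i < y i ∧ y i ≤ b) →
    (∀ i j : Fin n, i < j → y i ≤ x j) →
    (∑ i, (y i - x i)) < δ → (∑ i, ‖f (y i) - f (x i)‖) < η

/-- `f` is locally absolutely continuous. -/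
def LocAbsCont {X : Type*} [NormedAddCommGroup X] (f : ℝ → X) : Prop :=
  ∀ s : ℝ, ∃ a b : ℝ, a < s ∧ s < b ∧ AbsContOn f a b

/-- `φ` is the phase shift of the natural parameterization `r`. -/
def IsPhaseShift {X : Type*} [NormedAddCommGroup X] [NormedSpace ℝ X]
    (r : ℝ → X) (φ : ℝ → ℝ) : Prop :=
  ∀ s : ℝ, s < φ s ∧ deriv r s = r (φ s) ∧ ∀ t : ℝ, s < t → deriv r s = r t → φ s ≤ t

open Filter Topology MeasureTheory
open scoped ENNReal NNReal

theorem countable_setOf_eq_of_deriv_ne_zero {F : Type*} [NormedAddCommGroup F]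
    [NormedSpace ℝ F] {f : ℝ → F} (hf : Differentiable ℝ f) (hf' : ∀ x, deriv f x ≠ 0) (c : F) :
    {x | f x = c}.Countable := by
  refine (countable_setOfPred_isolated_right_within (s := {x | f x = c})).mono fun x hx => ?_
  refine ⟨hx, ?_⟩
  have hne : ∀ᶠ z in 𝓝[≠] x, f z ≠ c := (hf x).hasDerivAt.eventually_ne (hf' x)
  rw [← eventually_false_iff_eq_bot]
  filter_upwards [nhdsWithin_mono x (fun z hz => hz.2.ne') hne, self_mem_nhdsWithin]
    with z hzc hz
  exact hzc hz.1

theorem linearIndependent_pair_of_norm_eq_one {E : Type*} [NormedAddCommGroup E]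
    [NormedSpace ℝ E] {u v : E} (hu : ‖u‖ = 1) (hv : ‖v‖ = 1) (hvu : v ≠ u) (hvu' : v ≠ -u) :
    LinearIndependent ℝ ![u, v] := by
  rw [LinearIndependent.pair_iff' (norm_ne_zero_iff.1 (hu ▸ one_ne_zero))]
  intro c hc
  have hc1 : |c| = 1 := by simpa [norm_smul, hu, hv] using congrArg norm hc
  rcases (abs_eq zero_le_one).1 hc1 with rfl | rfl
  · exact hvu (by simpa using hc.symm)
  · exact hvu' (by simpa using hc.symm)

theorem AbsContOn.comp_lipschitzWith {E : Type*} [NormedAddCommGroup E] {g : ℝ → E} {K : ℝ≥0}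
    (hg : LipschitzWith K g) {f : ℝ → ℝ} {a b : ℝ} (hf : AbsContOn f a b) :
    AbsContOn (g ∘ f) a b := by
  intro η hη
  obtain ⟨δ, hδ, hfδ⟩ := hf (η / (K + 1)) (by positivity)
  refine ⟨δ, hδ, fun n x y hxy hord hlen => ?_⟩
  calc ∑ i, ‖g (f (y i)) - g (f (x i))‖ ≤ ∑ i, (K + 1) * ‖f (y i) - f (x i)‖ := by
        gcongr with i
        rw [← dist_eq_norm, ← dist_eq_norm]
        exact (hg.dist_le_mul _ _).trans (by gcongr; linarith)
    _ = (K + 1) * ∑ i, ‖f (y i) - f (x i)‖ := (Finset.mul_sum _ _ _).symm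
    _ < (K + 1) * (η / (K + 1)) := by gcongr; exact hfδ n x y hxy hord hlen
    _ = η := by field_simp

theorem LipschitzPtAt.exists_nat {f : ℝ → ℝ} {s : ℝ} (h : LipschitzPtAt f s) :
    ∃ n : ℕ, ∀ ε, |ε| < ((n : ℝ) + 1)⁻¹ → |f (s + ε) - f s| ≤ ((n : ℝ) + 1) * |ε| := by
  obtain ⟨C, hC⟩ := h
  obtain ⟨δ, hδ, hCδ⟩ := hC 1 one_pos
  obtain ⟨n, hn⟩ := exists_nat_ge (max C δ⁻¹)
  have hnδ : ((n : ℝ) + 1)⁻¹ < δ :=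
    (inv_lt_comm₀ (by positivity) hδ).2 (by linarith [le_max_right C δ⁻¹])
  refine ⟨n, fun ε hε => ?_⟩
  calc |f (s + ε) - f s| ≤ C * |ε| + 1 * |ε| := hCδ ε (hε.trans hnδ)
    _ ≤ ((n : ℝ) + 1) * |ε| := by nlinarith [abs_nonneg ε, le_max_left C δ⁻¹]

theorem MeasureTheory.Measure.AbsolutelyContinuous.exists_pos_forall_measure_lt
    {α : Type*} [MeasurableSpace α] {μ ν : Measure α} [μ.HaveLebesgueDecomposition ν]
    (hμν : μ ≪ ν) {s : Set α} (hs : μ s ≠ ∞) {ε : ℝ≥0∞} (hε : 0 < ε) :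
    ∃ δ > 0, ∀ t ⊆ s, MeasurableSet t → ν t < δ → μ t < ε := by
  have hint : ∫⁻ x in s, μ.rnDeriv ν x ∂ν ≠ ∞ :=
    ((Measure.setLIntegral_rnDeriv_le s).trans_lt hs.lt_top).ne
  have hsmall := tendsto_setLIntegral_zero hint
    (l := Filter.comap (ν.restrict s) (𝓝 0)) (s := id) tendsto_comap
  obtain ⟨δ, hδ, hδε⟩ :=
    (ENNReal.nhds_zero_basis.comap _).tendsto_left_iff.1 hsmall (Iio ε) (Iio_mem_nhds hε)
  refine ⟨δ, hδ, fun t hts ht htδ => ?_⟩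
  have hμt : ∫⁻ x in t, μ.rnDeriv ν x ∂ν.restrict s < ε :=
    hδε (show ν.restrict s t < δ by rwa [Measure.restrict_eq_self ν hts])
  rwa [Measure.restrict_restrict_of_subset hts,
    Measure.setLIntegral_rnDeriv' hμν ht] at hμt

namespace StieltjesFunction

variable (f : StieltjesFunction ℝ)

theorem measure_le_of_forall_abs_sub_le {A : Set ℝ} {c : ℝ≥0} {δ : ℝ} (hδ : 0 < δ)
    (hA : ∀ x ∈ A, ∀ ε, |ε| < δ → |f (x + ε) - f x| ≤ c * |ε|) :
    f.measure A ≤ (2 * c : ℝ≥0) • volume A := by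
  refine (Besicovitch.vitaliFamily f.measure).measure_le_of_frequently_le
    ((2 * c : ℝ≥0) • volume) Measure.AbsolutelyContinuous.rfl A fun x hx => ?_
  refine (Besicovitch.tendsto_filterAt f.measure x).frequently (Eventually.frequently ?_)
  filter_upwards [Ioo_mem_nhdsGT (half_pos hδ)] with r ⟨hr, hrδ⟩
  have hright : f (x + r) - f x ≤ c * r := by
    have := hA x hx r (by rw [abs_of_pos hr]; linarith)
    rw [abs_of_pos hr] at this
    exact (le_abs_self _).trans this
  have hleft : f x - f (x - 2 * r) ≤ c * (2 * r) := by
    have h2r : |-(2 * r)| = 2 * r := by rw [abs_neg, abs_of_pos (by positivity)]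
    have := hA x hx (-(2 * r)) (by rw [h2r]; linarith)
    rw [h2r, ← sub_eq_add_neg] at this
    linarith [neg_abs_le (f (x - 2 * r) - f x)]
  -- A half-open interval avoids the left limits of `f` that `f.measure_Icc` would involve.
  have hball : closedBall x r ⊆ Ioc (x - 2 * r) (x + r) := by
    rw [Real.closedBall_eq_Icc]
    exact fun y hy => ⟨by linarith [hy.1], hy.2⟩
  calc f.measure (closedBall x r) ≤ f.measure (Ioc (x - 2 * r) (x + r)) := measure_mono hball
    _ = ENNReal.ofReal (f (x + r) - f (x - 2 * r)) := f.measure_Ioc _ _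
    _ ≤ ENNReal.ofReal (2 * c * (2 * r)) :=
        ENNReal.ofReal_le_ofReal (by nlinarith [c.coe_nonneg])
    _ = ((2 * c : ℝ≥0) • volume) (closedBall x r) := by
        rw [Measure.smul_apply, Real.volume_closedBall, ENNReal.smul_def, smul_eq_mul,
          ← ENNReal.ofReal_coe_nnreal, ← ENNReal.ofReal_mul (by positivity)]
        push_cast
        ring_nf

theorem absolutelyContinuous_volume_of_countable_not_lipschitzPtAt (hf : Continuous f)
    (hC : {s | ¬ LipschitzPtAt f s}.Countable) : f.measure ≪ volume := by
  have : NullSingletonClass f.measure := ⟨fun x => by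
    rw [f.measure_singleton, hf.continuousWithinAt.leftLim_eq, sub_self, ENNReal.ofReal_zero]⟩
  let G : ℕ → Set ℝ := fun n =>
    {s | ∀ ε, |ε| < ((n : ℝ) + 1)⁻¹ → |f (s + ε) - f s| ≤ ((n : ℝ) + 1) * |ε|}
  intro E hE
  have hcover : E ⊆ {s | ¬ LipschitzPtAt f s} ∪ ⋃ n, E ∩ G n := fun s hs => by
    by_cases h : LipschitzPtAt f s
    · obtain ⟨n, hn⟩ := h.exists_nat
      exact Or.inr (mem_iUnion.2 ⟨n, hs, hn⟩)
    · exact Or.inl h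
  refine measure_mono_null hcover (measure_union_null (hC.measure_zero _)
    (measure_iUnion_null fun n => nonpos_iff_eq_zero.1 ?_))
  calc f.measure (E ∩ G n) ≤ (2 * (n + 1) : ℝ≥0) • volume (E ∩ G n) :=
        f.measure_le_of_forall_abs_sub_le (c := n + 1) (δ := ((n : ℝ) + 1)⁻¹) (by positivity)
          fun x hx ε hε => by exact_mod_cast hx.2 ε (by exact_mod_cast hε)
    _ = 0 := by rw [measure_mono_null inter_subset_left hE, smul_zero]

theorem absContOn_of_measure_absolutelyContinuous (h : f.measure ≪ volume) (a b : ℝ) :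
    AbsContOn f a b := by
  intro η hη
  obtain ⟨δ, hδ, hδη⟩ := h.exists_pos_forall_measure_lt
    (f.measure_Ioc a b ▸ ENNReal.ofReal_ne_top) (ENNReal.ofReal_pos.2 hη)
  obtain ⟨δ', -, hδ'pos, hδ'δ⟩ := ENNReal.lt_iff_exists_real_btwn.1 hδ
  refine ⟨δ', ENNReal.ofReal_pos.1 hδ'pos, fun n x y hxy hord hlen => ?_⟩
  have hdisj : Pairwise (Disjoint on fun i => Ioc (x i) (y i)) := by
    intro i j hij
    rcases hij.lt_or_gt with hij | hij
    · exact Ioc_disjoint_Ioc_of_le (hord i j hij)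
    · exact (Ioc_disjoint_Ioc_of_le (hord j i hij)).symm
  have hvol : volume (⋃ i, Ioc (x i) (y i)) < δ := calc
    volume (⋃ i, Ioc (x i) (y i)) ≤ ∑ i, volume (Ioc (x i) (y i)) :=
        measure_iUnion_fintype_le _ _
    _ = ENNReal.ofReal (∑ i, (y i - x i)) := by
        simp_rw [Real.volume_Ioc]
        rw [ENNReal.ofReal_sum_of_nonneg fun i _ => sub_nonneg.2 (hxy i).2.1.le]
    _ ≤ ENNReal.ofReal δ' := ENNReal.ofReal_le_ofReal hlen.le
    _ < δ := hδ'δ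
  have hmeasure :
      f.measure (⋃ i, Ioc (x i) (y i)) = ENNReal.ofReal (∑ i, ‖f (y i) - f (x i)‖) := by
    rw [measure_iUnion hdisj fun _ => measurableSet_Ioc, tsum_fintype,
      ENNReal.ofReal_sum_of_nonneg fun _ _ => norm_nonneg _]
    refine Finset.sum_congr rfl fun i _ => ?_
    rw [f.measure_Ioc, Real.norm_eq_abs, abs_of_nonneg (sub_nonneg.2 (f.mono (hxy i).2.1.le))]
  have hsmall := hδη _ (iUnion_subset fun i => Ioc_subset_Ioc (hxy i).1 (hxy i).2.2)
    (MeasurableSet.iUnion fun _ => measurableSet_Ioc) hvol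
  rwa [hmeasure, ENNReal.ofReal_lt_ofReal_iff hη] at hsmall

end StieltjesFunction

theorem not_absolutely_smooth_two_special_directions_general
    (X : Type*) [NormedAddCommGroup X] [NormedSpace ℝ X]
    (r : ℝ → X) (hr : ContDiff ℝ 1 r)
    (hr1 : ∀ t, ‖r t‖ = 1) (hdr : ∀ t, ‖deriv r t‖ = 1)
    (φ : ℝ → ℝ) (hφ : IsPhaseShift r φ)
    (hφc : Continuous φ) (hφm : Monotone φ)
    (hnas : ¬ LocAbsCont (deriv r)) :
    ¬ ({s : ℝ | ¬ LipschitzPtAt φ s}.Countable) ∧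
    ∃ a b : ℝ, ¬ LipschitzPtAt φ a ∧ ¬ LipschitzPtAt φ b ∧
      LinearIndependent ℝ ![r a, r b] := by
  have hrd : Differentiable ℝ r := hr.differentiable one_ne_zero
  have hr_lip : LipschitzWith 1 r :=
    lipschitzWith_of_nnnorm_deriv_le hrd fun t => by simp [← NNReal.coe_le_coe, hdr]
  have hC : ¬ {s | ¬ LipschitzPtAt φ s}.Countable := by
    intro hC
    obtain ⟨f, rfl⟩ : ∃ f : StieltjesFunction ℝ, ⇑f = φ :=
      ⟨⟨φ, hφm, fun _ => hφc.continuousWithinAt⟩, rfl⟩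
    have hf := f.absContOn_of_measure_absolutelyContinuous
      (f.absolutelyContinuous_volume_of_countable_not_lipschitzPtAt hφc hC)
    refine hnas fun s => ⟨s - 1, s + 1, by linarith, by linarith, ?_⟩
    rw [show deriv r = r ∘ f from funext fun s => (hφ s).2.1]
    exact (hf _ _).comp_lipschitzWith hr_lip
  refine ⟨hC, ?_⟩
  obtain ⟨a, ha, -⟩ := not_subset.1 fun h => hC (countable_empty.mono h)
  have hdr0 : ∀ t, deriv r t ≠ 0 := fun t h => by simpa [h] using hdr t
  have hlevels : ({s | r s = r a} ∪ {s | r s = -r a}).Countable :=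
    (countable_setOf_eq_of_deriv_ne_zero hrd hdr0 _).union
      (countable_setOf_eq_of_deriv_ne_zero hrd hdr0 _)
  obtain ⟨b, hb, hbr⟩ := not_subset.1 fun hsub => hC (hlevels.mono hsub)
  exact ⟨a, b, ha, hb, linearIndependent_pair_of_norm_eq_one (hr1 a) (hr1 b)
    (fun h => hbr (Or.inl h)) fun h => hbr (Or.inr h)⟩

theorem not_absolutely_smooth_two_special_directions
    (X : Type*) [NormedAddCommGroup X] [NormedSpace ℝ X] [StrictConvexSpace ℝ X]
    (hdim : finrank ℝ X = 2)
    (hsmooth : ∀ x : X, x ≠ 0 → DifferentiableAt ℝ (fun y : X => ‖y‖) x)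
    (r : ℝ → X) (hr : ContDiff ℝ 1 r)
    (hr1 : ∀ t, ‖r t‖ = 1) (hdr : ∀ t, ‖deriv r t‖ = 1)
    (φ : ℝ → ℝ) (hφ : IsPhaseShift r φ)
    (hφc : Continuous φ) (hφm : Monotone φ)
    (hnas : ¬ LocAbsCont (deriv r)) :
    ¬ ({s : ℝ | ¬ LipschitzPtAt φ s}.Countable) ∧
    ∃ a b : ℝ, ¬ LipschitzPtAt φ a ∧ ¬ LipschitzPtAt φ b ∧
      LinearIndependent ℝ ![r a, r b] :=
  not_absolutely_smooth_two_special_directions_general X r hr hr1 hdr φ hφ hφc hφm hnas
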